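/- arXiv:1612.05893 — 2 statements merged into one kernel-verified Lean document; each statement's English description precedes it below -/
import Mathlib

section
/- Let X be a compact metrizable space with a continuous action of a countable group Γ. If the dynamical system (X,Γ) satisfies the descending chain condition (every decreasing sequence of Γ-invariant closed subsets of X eventually stabilizes), then every injective Γ-equivariant continuous map τ : X → X is surjective. -/
/-! The images `τ^[i] '' X` are compact, hence closed, `Γ`-invariant and decreasing, so by the
descending chain condition `τ^[k+1] '' X = τ^[k] '' X` for some `k`; cancelling the injective
`τ^[k]` then gives `τ '' X = X`. -/

open Function Set

theorem Function.Injective.surjective_of_range_iterate_succ_eq {α : Type*} {f : α → α}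
    (hf : Injective f) {k : ℕ} (hk : range f^[k + 1] = range f^[k]) : Surjective f := by
  intro x
  obtain ⟨z, hz⟩ : f^[k] x ∈ range f^[k + 1] := hk ▸ mem_range_self x
  rw [iterate_succ_apply] at hz
  exact ⟨z, hf.iterate k hz⟩

theorem range_iterate_subset_of_succ {α : Type*} (f : α → α) (n : ℕ) :
    range f^[n + 1] ⊆ range f^[n] := by
  rw [iterate_succ]
  exact range_comp_subset_range _ _

theorem smul_mem_range_iterate {Γ α : Type*} [SMul Γ α] {f : α → α}
    (hf : ∀ (γ : Γ) (x : α), f (γ • x) = γ • f x) (n : ℕ) (γ : Γ) {x : α}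
    (hx : x ∈ range f^[n]) : γ • x ∈ range f^[n] := by
  obtain ⟨y, rfl⟩ := hx
  have hcomm : Function.Commute f (γ • ·) := fun y => hf γ y
  exact ⟨γ • y, hcomm.iterate_left n y⟩

theorem stmt_0_general {X : Type*} [TopologicalSpace X] [CompactSpace X]
    [TopologicalSpace.MetrizableSpace X]
    {Γ : Type*} [Group Γ] [MulAction Γ X]
    (hdcc : ∀ A : ℕ → Set X, A 0 = Set.univ →
      (∀ i, IsClosed (A i)) →
      (∀ i (γ : Γ), ∀ x ∈ A i, γ • x ∈ A i) →
      (∀ i, A (i + 1) ⊆ A i) →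
      ∃ k, ∀ i ≥ k, A i = A k)
    (τ : X → X) (hτcont : Continuous τ)
    (hτequiv : ∀ (γ : Γ) (x : X), τ (γ • x) = γ • τ x)
    (hτinj : Function.Injective τ) :
    Function.Surjective τ := by
  obtain ⟨k, hk⟩ := hdcc (fun i => range τ^[i]) (by simp)
    (fun i => (isCompact_range (hτcont.iterate i)).isClosed)
    (smul_mem_range_iterate hτequiv) (range_iterate_subset_of_succ τ)
  exact hτinj.surjective_of_range_iterate_succ_eq (hk (k + 1) k.le_succ)

/-- If a compact metrizable dynamical system `(X, Γ)` satisfies the descending chain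
condition, then every injective `Γ`-equivariant continuous self-map is surjective. -/
theorem stmt_0 {X : Type*} [TopologicalSpace X] [CompactSpace X]
    [TopologicalSpace.MetrizableSpace X]
    {Γ : Type*} [Group Γ] [Countable Γ] [MulAction Γ X]
    (hcont : ∀ γ : Γ, Continuous (fun x : X => γ • x))
    (hdcc : ∀ A : ℕ → Set X, A 0 = Set.univ →
      (∀ i, IsClosed (A i)) →
      (∀ i (γ : Γ), ∀ x ∈ A i, γ • x ∈ A i) →
      (∀ i, A (i + 1) ⊆ A i) →
      ∃ k, ∀ i ≥ k, A i = A k)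
    (τ : X → X) (hτcont : Continuous τ)
    (hτequiv : ∀ (γ : Γ) (x : X), τ (γ • x) = γ • τ x)
    (hτinj : Function.Injective τ) :
    Function.Surjective τ :=
  stmt_0_general hdcc τ hτcont hτequiv hτinj
end

section
/- Let X ⊂ (ℝ/ℤ)^{ℤ²} be the connected Ledrappier subshift, consisting of all x : ℤ² → ℝ/ℤ satisfying x(n₁+1, n₂) + x(n₁, n₂) + x(n₁, n₂+1) = 0 for all (n₁,n₂) ∈ ℤ². Let E = {(n₁,n₂) ∈ ℤ² : n₂ = 0, or (n₁ = 0 and n₂ < 0)}. Then the restriction map X → (ℝ/ℤ)^E, x ↦ x|_E, is a continuous group isomorphism. -/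
/-- The connected Ledrappier subshift. -/
def ledrappier : Set ((ℤ × ℤ) → AddCircle (1 : ℝ)) :=
  {x | ∀ n₁ n₂ : ℤ, x (n₁ + 1, n₂) + x (n₁, n₂) + x (n₁, n₂ + 1) = 0}

/-- The index set `E = {(n₁,n₂) : n₂ = 0, or n₁ = 0 and n₂ < 0}`. -/
def ledrappierE : Set (ℤ × ℤ) :=
  {p | p.2 = 0 ∨ (p.1 = 0 ∧ p.2 < 0)}

/-!
The relation `x(n₁+1, n₂) + x(n₁, n₂) + x(n₁, n₂+1) = 0` expresses row `n₂ + 1` in terms of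
row `n₂`, and, conversely, row `n₂` in terms of row `n₂ + 1` together with one of its entries,
since `x(n₁+1, n₂) + x(n₁, n₂)` is prescribed for all `n₁`. So row `0` of `E` fixes all rows
above, and the entries `x(0, n₂)`, `n₂ < 0`, of `E` fix the rows below one by one. Nothing in
this uses more than the additive group structure of `ℝ/ℤ`.
-/

section TwoSidedSeq

variable {α : Type*}

/-- The sequence starting at `c` that moves up by `up n : α → α` from `n` to `n + 1` for
`n ≥ 0`, and down by `down n` from `n + 1` to `n` for `n < 0`. -/
def twoSidedSeq (c : α) (up down : ℤ → α → α) : ℤ → α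
  | Int.ofNat k => Nat.rec c (fun k => up k) k
  | Int.negSucc k => Nat.rec (motive := fun _ => α) c
      (fun k => down (Int.negSucc k)) (k + 1)

variable (c : α) (up down : ℤ → α → α)

theorem twoSidedSeq_negSucc (k : ℕ) :
    twoSidedSeq c up down (Int.negSucc k) =
      down (Int.negSucc k) (twoSidedSeq c up down (Int.negSucc k + 1)) := by
  cases k <;> rfl

theorem twoSidedSeq_add_one (h : ∀ n, Function.LeftInverse (up n) (down n)) (n : ℤ) :
    twoSidedSeq c up down (n + 1) = up n (twoSidedSeq c up down n) := by
  rcases n with k | k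
  · rfl
  · rw [twoSidedSeq_negSucc, h]

end TwoSidedSeq

section Ledrappier

variable {G : Type*} [AddCommGroup G]

def IsLedrappier (x : ℤ × ℤ → G) : Prop :=
  ∀ n₁ n₂ : ℤ, x (n₁ + 1, n₂) + x (n₁, n₂) + x (n₁, n₂ + 1) = 0

theorem IsLedrappier.apply_add_one_right {x : ℤ × ℤ → G} (hx : IsLedrappier x) (n₁ n₂ : ℤ) :
    x (n₁, n₂ + 1) = -(x (n₁ + 1, n₂) + x (n₁, n₂)) :=
  eq_neg_of_add_eq_zero_left <| by rw [add_comm]; exact hx n₁ n₂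

def solveRow (c : G) (h : ℤ → G) : ℤ → G :=
  twoSidedSeq c (fun n a => h n - a) (fun n a => h n - a)

theorem solveRow_add_one_add (c : G) (h : ℤ → G) (n : ℤ) :
    solveRow c h (n + 1) + solveRow c h n = h n := by
  rw [solveRow, twoSidedSeq_add_one _ _ _ (fun n a => sub_sub_cancel (h n) a), sub_add_cancel]

theorem eq_of_add_one_add_eq {f g : ℤ → G} (h₀ : f 0 = g 0)
    (h : ∀ n, f (n + 1) + f n = g (n + 1) + g n) : f = g := by
  funext n
  induction n using Int.induction_on with
  | zero => exact h₀
  | succ i ih => exact add_right_cancel (by rw [h i, ih])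
  | pred i ih =>
    have := h (-i - 1)
    rw [sub_add_cancel, ih] at this
    exact add_left_cancel this

theorem IsLedrappier.eq_of_eqOn {x y : ℤ × ℤ → G} (hx : IsLedrappier x) (hy : IsLedrappier y)
    (hE : Set.EqOn x y ledrappierE) : x = y := by
  suffices ∀ n₂ n₁, x (n₁, n₂) = y (n₁, n₂) from funext fun p => this p.2 p.1
  intro n₂
  induction n₂ using Int.induction_on with
  | zero => exact fun n₁ => hE (Or.inl rfl)
  | succ i ih =>
    intro n₁
    rw [hx.apply_add_one_right, hy.apply_add_one_right, ih, ih]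
  | pred i ih =>
    have hrow : (fun n₁ => x (n₁, -i - 1)) = fun n₁ => y (n₁, -i - 1) := by
      refine eq_of_add_one_add_eq (hE (Or.inr ⟨rfl, by simp only; omega⟩)) fun n₁ => ?_
      have hx' := hx.apply_add_one_right n₁ (-i - 1)
      have hy' := hy.apply_add_one_right n₁ (-i - 1)
      rw [sub_add_cancel] at hx' hy'
      rw [← neg_inj, ← hx', ← hy', ih]
    exact congrFun hrow

def ledrappierRows (b c : ℤ → G) : ℤ → ℤ → G :=
  twoSidedSeq b (fun _ r n => -(r (n + 1) + r n)) (fun k r => solveRow (c k) (-r))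

theorem isLedrappier_ledrappierRows (b c : ℤ → G) :
    IsLedrappier fun p : ℤ × ℤ => ledrappierRows b c p.2 p.1 := by
  intro n₁ n₂
  have hinv : ∀ k, Function.LeftInverse (fun r n => -(r (n + 1) + r n))
      (fun r : ℤ → G => solveRow (c k) (-r)) := fun k r => by
    funext n
    change -(solveRow (c k) (-r) (n + 1) + solveRow (c k) (-r) n) = r n
    rw [solveRow_add_one_add, Pi.neg_apply, neg_neg]
  simp only [ledrappierRows, twoSidedSeq_add_one _ _ _ hinv]
  abel

theorem ledrappierRows_negSucc_zero (b c : ℤ → G) (k : ℕ) :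
    ledrappierRows b c (Int.negSucc k) 0 = c (Int.negSucc k) := by
  rw [ledrappierRows, twoSidedSeq_negSucc]
  rfl

theorem exists_isLedrappier_eqOn (z : ℤ × ℤ → G) :
    ∃ x, IsLedrappier x ∧ Set.EqOn x z ledrappierE := by
  refine ⟨_, isLedrappier_ledrappierRows (fun n₁ => z (n₁, 0)) (fun n₂ => z (0, n₂)), ?_⟩
  rintro ⟨n₁, n₂⟩ (h | ⟨h₁, h₂⟩)
  · simp only at h
    subst h
    rfl
  · simp only at h₁ h₂
    subst h₁
    rcases n₂ with k | k
    · exact absurd h₂ (by simp)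
    · exact ledrappierRows_negSucc_zero _ _ k

end Ledrappier

theorem mem_ledrappier {x : ℤ × ℤ → AddCircle (1 : ℝ)} : x ∈ ledrappier ↔ IsLedrappier x :=
  Iff.rfl

/-- The restriction map from the connected Ledrappier subshift `X` to `(ℝ/ℤ)^E` is a
continuous group isomorphism: it is additive, continuous, injective on `X`, and maps
`X` onto all of `(ℝ/ℤ)^E`. -/
theorem stmt_15
    (R : ((ℤ × ℤ) → AddCircle (1 : ℝ)) → (ledrappierE → AddCircle (1 : ℝ)))
    (hR : ∀ x (e : ledrappierE), R x e = x e.val) :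
    (∀ x y, R (x + y) = R x + R y) ∧ Continuous R ∧
      Set.InjOn R ledrappier ∧ R '' ledrappier = Set.univ := by
  obtain rfl : R = fun x e => x e.val := funext fun x => funext (hR x)
  refine ⟨fun x y => rfl, continuous_pi fun e => continuous_apply e.val, ?_, ?_⟩
  · intro x hx y hy hxy
    exact (mem_ledrappier.1 hx).eq_of_eqOn hy fun p hp => congrFun hxy ⟨p, hp⟩
  · refine Set.eq_univ_of_forall fun y => ?_
    obtain ⟨x, hx, hxE⟩ := exists_isLedrappier_eqOn (Function.extend Subtype.val y 0)
    exact ⟨x, mem_ledrappier.2 hx,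
      funext fun e => (hxE e.2).trans (Subtype.val_injective.extend_apply y 0 e)⟩
end
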